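/- (Monotonicity and convexity of the Wyner-Ziv-type rate-distortion function, used in the proof of Theorem 6) Let (X,Y,Z) be jointly distributed finite-valued random variables and let D_0 = ℰ(Z|(X,Y)) be the minimum attainable distortion. Then the function D ↦ R^FWZ_{Z,X|Y}(D) is non-increasing on [D_0, ∞) and convex on [D_0, ∞). -/

import Mathlib

/-!
`R^FWZ(D)` is the lower envelope `D ↦ inf {I(X;U|Y) : ℰ(Z|(U,Y)) ≤ D}` over test channels
`p(u|x)`. The constraint set grows with `D`, so the envelope is non-increasing as soon as the
infimum is over a nonempty set that is bounded below: rates are conditional mutual informations,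
nonnegative by Gibbs' inequality, and for `D ≥ D₀` the channel `U = X` is admissible.
Convexity is time sharing: running two channels with probabilities `a` and `b` on disjoint output
alphabets gives a channel of rate exactly `a R₁ + b R₂` (the entropy of the switch cancels) and
distortion at most `a D₁ + b D₂` (each branch keeps its own optimal estimator).
-/

namespace Cascade

structure FinPMF (Ω : Type) [Fintype Ω] where
  p : Ω → ℝ
  nonneg : ∀ ω, 0 ≤ p ω
  sum_one : ∑ ω, p ω = 1

variable {Ω : Type} [Fintype Ω]

/-- Probability that the random variable `X` takes the value `x`. -/
noncomputable def prob (μ : FinPMF Ω) {α : Type} [DecidableEq α] (X : Ω → α) (x : α) : ℝ :=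
  ∑ ω ∈ Finset.univ.filter (fun ω => X ω = x), μ.p ω

/-- Expectation of a real random variable. -/
noncomputable def expect (μ : FinPMF Ω) (f : Ω → ℝ) : ℝ := ∑ ω, μ.p ω * f ω

/-- Shannon entropy (base 2) of a finite-valued random variable. -/
noncomputable def entropy (μ : FinPMF Ω) {α : Type} [Fintype α] [DecidableEq α] (X : Ω → α) : ℝ :=
  -∑ x, prob μ X x * Real.logb 2 (prob μ X x)

/-- Conditional mutual information `I(X;Y|Z)` (base 2). -/
noncomputable def condMI (μ : FinPMF Ω) {α β γ : Type} [Fintype α] [DecidableEq α]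
    [Fintype β] [DecidableEq β] [Fintype γ] [DecidableEq γ]
    (X : Ω → α) (Y : Ω → β) (Z : Ω → γ) : ℝ :=
  entropy μ (fun ω => (X ω, Z ω)) + entropy μ (fun ω => (Y ω, Z ω))
    - entropy μ (fun ω => (X ω, Y ω, Z ω)) - entropy μ Z

/-- Minimum expected distortion `ℰ(Z|Q)` for estimating the value `Zr` from the
observation `Q` by some function `f`. -/
noncomputable def calE {Ω : Type} [Fintype Ω] (μ : FinPMF Ω) {Zt Zhat : Type}
    [Fintype Zhat] [Nonempty Zhat] (d : Zt → Zhat → ℝ)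
    {α : Type} (Q : Ω → α) (Zr : Ω → Zt) : ℝ :=
  ⨅ f : α → Zhat, expect μ (fun ω => d (Zr ω) (f (Q ω)))

/-- The extension of a pmf `μ` by an auxiliary `U ∈ Fin m` generated from `X` through the
conditional pmf (kernel) `k`; this builds in the Markov chain `U −∘− X −∘− everything else`. -/
noncomputable def extendPMF {Ω : Type} [Fintype Ω] (μ : FinPMF Ω) {𝒳 : Type}
    (X : Ω → 𝒳) {m : ℕ} (k : 𝒳 → Fin m → ℝ)
    (hk0 : ∀ x u, 0 ≤ k x u) (hk1 : ∀ x, ∑ u, k x u = 1) : FinPMF (Ω × Fin m) where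
  p := fun p => μ.p p.1 * k (X p.1) p.2
  nonneg := fun p => mul_nonneg (μ.nonneg _) (hk0 _ _)
  sum_one := by
    rw [Fintype.sum_prod_type]
    simp_rw [← Finset.mul_sum, hk1, mul_one]
    exact μ.sum_one

/-- The Wyner-Ziv-type rate-distortion function `R^FWZ_{Z,X|Y}(D)` for lossy function
computation: the infimum of `I(X;U|Y)` over all finite auxiliary alphabets `Fin m` and all
auxiliaries `U` generated from `X` via a conditional pmf `k` (so that `U −∘− X −∘− (Y,Z)`
is a Markov chain) such that `ℰ(Z|(U,Y)) ≤ D`. -/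
noncomputable def RFWZ {Ω 𝒳 𝒴 Zt : Type} [Fintype Ω] [Fintype 𝒳] [DecidableEq 𝒳]
    [Fintype 𝒴] [DecidableEq 𝒴] {Zhat : Type} [Fintype Zhat] [Nonempty Zhat]
    (μ : FinPMF Ω) (X : Ω → 𝒳) (Y : Ω → 𝒴) (Zr : Ω → Zt) (d : Zt → Zhat → ℝ)
    (D : ℝ) : ℝ :=
  sInf { r : ℝ | ∃ (m : ℕ) (k : 𝒳 → Fin m → ℝ) (hk0 : ∀ x u, 0 ≤ k x u)
      (hk1 : ∀ x, ∑ u, k x u = 1),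
      calE (extendPMF μ X k hk0 hk1) d (fun p => (p.2, Y p.1)) (fun p => Zr p.1) ≤ D ∧
      r = condMI (extendPMF μ X k hk0 hk1) (fun p => X p.1) (fun p => p.2)
            (fun p => Y p.1) }

section Probability

variable {Ω : Type} [Fintype Ω] (μ : FinPMF Ω) {α β γ : Type}

lemma prob_nonneg [DecidableEq α] (V : Ω → α) (v : α) : 0 ≤ prob μ V v :=
  Finset.sum_nonneg fun ω _ => μ.nonneg ω

lemma prob_mono [DecidableEq α] [DecidableEq β] {V : Ω → α} {W : Ω → β} {v : α} {w : β}
    (h : ∀ ω, V ω = v → W ω = w) : prob μ V v ≤ prob μ W w :=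
  Finset.sum_le_sum_of_subset_of_nonneg
    (fun ω hω => by simp_all) (fun ω _ _ => μ.nonneg ω)

lemma sum_prob [Fintype α] [DecidableEq α] (V : Ω → α) : ∑ v, prob μ V v = 1 := by
  simp only [prob, Finset.sum_filter]
  rw [Finset.sum_comm, ← μ.sum_one]
  simp

lemma sum_prob_pair_left [Fintype α] [DecidableEq α] [DecidableEq β] (V : Ω → α) (W : Ω → β)
    (w : β) : ∑ v, prob μ (fun ω => (V ω, W ω)) (v, w) = prob μ W w := by
  simp only [prob, Finset.sum_filter, Prod.mk.injEq]
  rw [Finset.sum_comm]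
  simp [ite_and]

lemma prob_comp_eq_sum [Fintype α] [DecidableEq α] [DecidableEq β] (V : Ω → α) (g : α → β)
    (b : β) : prob μ (fun ω => g (V ω)) b = ∑ v with g v = b, prob μ V v := by
  rw [prob, Finset.sum_filter, ← Finset.sum_fiberwise Finset.univ V]
  simp_rw [prob, Finset.sum_filter]
  refine Finset.sum_congr rfl fun v _ => ?_
  split_ifs <;> simp_all

lemma entropy_eq_sum_comp [Fintype α] [DecidableEq α] [Fintype β] [DecidableEq β]
    (V : Ω → α) (g : α → β) (W : Ω → β) (hW : ∀ ω, W ω = g (V ω)) :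
    entropy μ W = -∑ v, prob μ V v * Real.logb 2 (prob μ W (g v)) := by
  obtain rfl : W = fun ω => g (V ω) := funext hW
  rw [entropy, ← Finset.sum_fiberwise Finset.univ g]
  simp_rw [prob_comp_eq_sum μ V g, Finset.sum_mul]
  congr 1
  refine Finset.sum_congr rfl fun b _ => Finset.sum_congr rfl fun v hv => ?_
  rw [(Finset.mem_filter.mp hv).2]

lemma entropy_eq_of_injective [Fintype α] [DecidableEq α] [Fintype β] [DecidableEq β]
    (V : Ω → α) {g : α → β} (hg : g.Injective) (W : Ω → β) (hW : ∀ ω, W ω = g (V ω)) :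
    entropy μ W = entropy μ V := by
  rw [entropy_eq_sum_comp μ V g W hW, entropy]
  congr 1
  refine Finset.sum_congr rfl fun v _ => ?_
  have hprob : prob μ W (g v) = prob μ V v :=
    le_antisymm (prob_mono μ fun ω h => hg ((hW ω).symm.trans h))
      (prob_mono μ fun ω h => (hW ω).trans (congrArg g h))
  rw [hprob]

end Probability

/-- Gibbs' inequality. -/
lemma sum_mul_logb_le_sum_mul_logb {ι : Type} [Fintype ι] {p q : ι → ℝ} (hp : ∀ i, 0 ≤ p i)
    (hq : ∀ i, 0 ≤ q i) (hpq : ∀ i, 0 < p i → 0 < q i) (hsum : ∑ i, q i ≤ ∑ i, p i) :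
    ∑ i, p i * Real.logb 2 (q i) ≤ ∑ i, p i * Real.logb 2 (p i) := by
  have hlog2 : 0 < Real.log 2 := Real.log_pos one_lt_two
  have key : ∀ i, p i * Real.logb 2 (q i) - p i * Real.logb 2 (p i) ≤ (q i - p i) / Real.log 2 := by
    intro i
    rcases (hp i).eq_or_lt with h0 | h0
    · rw [← h0]
      simpa using div_nonneg (hq i) hlog2.le
    · have hqi := hpq i h0
      rw [Real.logb, Real.logb, ← mul_sub, ← sub_div, ← Real.log_div hqi.ne' h0.ne', mul_div_assoc']
      gcongr
      calc p i * Real.log (q i / p i) ≤ p i * (q i / p i - 1) :=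
            mul_le_mul_of_nonneg_left (Real.log_le_sub_one_of_pos (div_pos hqi h0)) h0.le
        _ = q i - p i := by field_simp
  have := Finset.sum_le_sum fun i (_ : i ∈ Finset.univ) => key i
  rw [Finset.sum_sub_distrib, ← Finset.sum_div, Finset.sum_sub_distrib] at this
  linarith [div_nonpos_of_nonpos_of_nonneg (sub_nonpos.mpr hsum) hlog2.le]

lemma sum_mul_mul_logb_mul {ι : Type} [Fintype ι] {a : ℝ} (ha : 0 ≤ a) {q : ι → ℝ}
    (hq : ∀ i, 0 ≤ q i) (hq1 : ∑ i, q i = 1) :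
    ∑ i, a * q i * Real.logb 2 (a * q i)
      = a * ∑ i, q i * Real.logb 2 (q i) + a * Real.logb 2 a := by
  have key : ∀ i, a * q i * Real.logb 2 (a * q i)
      = a * (q i * Real.logb 2 (q i)) + a * Real.logb 2 a * q i := by
    intro i
    rcases ha.eq_or_lt with rfl | ha'
    · simp
    rcases (hq i).eq_or_lt with h0 | h0
    · simp [← h0]
    · rw [Real.logb_mul ha'.ne' h0.ne']
      ring
  simp only [key, Finset.sum_add_distrib, ← Finset.mul_sum, hq1, mul_one]

lemma condMI_nonneg {Ω : Type} [Fintype Ω] (μ : FinPMF Ω) {α β γ : Type} [Fintype α]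
    [DecidableEq α] [Fintype β] [DecidableEq β] [Fintype γ] [DecidableEq γ]
    (A : Ω → α) (B : Ω → β) (C : Ω → γ) : 0 ≤ condMI μ A B C := by
  set V : Ω → α × β × γ := fun ω => (A ω, B ω, C ω)
  set pAC := prob μ fun ω => (A ω, C ω)
  set pBC := prob μ fun ω => (B ω, C ω)
  set pC := prob μ C
  -- `q` is the law of `(A, B, C)` that makes `A` and `B` conditionally independent given `C`
  set q : α × β × γ → ℝ := fun t => pAC (t.1, t.2.2) * pBC (t.2.1, t.2.2) / pC t.2.2
  have hmarg : ∀ t, 0 < prob μ V t → 0 < pAC (t.1, t.2.2) ∧ 0 < pBC (t.2.1, t.2.2) ∧ 0 < pC t.2.2 :=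
    fun t ht => ⟨ht.trans_le (prob_mono μ fun ω h => by rw [← h]),
      ht.trans_le (prob_mono μ fun ω h => by rw [← h]),
      ht.trans_le (prob_mono μ fun ω h => by rw [← h])⟩
  have hlogq : ∀ t, prob μ V t * Real.logb 2 (q t) = prob μ V t * Real.logb 2 (pAC (t.1, t.2.2))
      + prob μ V t * Real.logb 2 (pBC (t.2.1, t.2.2)) - prob μ V t * Real.logb 2 (pC t.2.2) := by
    intro t
    rcases (prob_nonneg μ V t).eq_or_lt with h0 | h0
    · simp [← h0]
    · obtain ⟨hAC, hBC, hC⟩ := hmarg t h0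
      rw [Real.logb_div (mul_pos hAC hBC).ne' hC.ne', Real.logb_mul hAC.ne' hBC.ne']
      ring
  have hexpand : condMI μ A B C
      = ∑ t, prob μ V t * Real.logb 2 (prob μ V t) - ∑ t, prob μ V t * Real.logb 2 (q t) := by
    rw [condMI, entropy_eq_sum_comp μ V (fun t => (t.1, t.2.2)) _ fun _ => rfl,
      entropy_eq_sum_comp μ V (fun t => (t.2.1, t.2.2)) _ fun _ => rfl,
      entropy_eq_sum_comp μ V (fun t => t.2.2) C fun _ => rfl, entropy]
    simp only [hlogq, Finset.sum_add_distrib, Finset.sum_sub_distrib]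
    ring
  have hqsum : ∑ t, q t ≤ ∑ t, prob μ V t :=
    calc ∑ t, q t = ∑ c, ∑ a, ∑ b, pAC (a, c) * pBC (b, c) / pC c := by
          simp only [q, Fintype.sum_prod_type]
          exact (Finset.sum_congr rfl fun _ _ => Finset.sum_comm).trans Finset.sum_comm
      _ = ∑ c, pC c * pC c / pC c := by
          simp_rw [← Finset.sum_div, ← Finset.sum_mul_sum, pAC, pBC, sum_prob_pair_left]
          rfl
      _ ≤ ∑ c, pC c := Finset.sum_le_sum fun c _ => by
          rw [mul_div_assoc]
          exact mul_le_of_le_one_right (prob_nonneg μ C c) (div_self_le_one _)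
      _ = ∑ t, prob μ V t := by rw [sum_prob, sum_prob]
  rw [hexpand, sub_nonneg]
  exact sum_mul_logb_le_sum_mul_logb (prob_nonneg μ V)
    (fun t => div_nonneg (mul_nonneg (prob_nonneg _ _ _) (prob_nonneg _ _ _)) (prob_nonneg _ _ _))
    (fun t ht => have h := hmarg t ht; div_pos (mul_pos h.1 h.2.1) h.2.2) hqsum

section Estimation

variable {Ω : Type} [Fintype Ω] (μ : FinPMF Ω) {Zt Zhat : Type} [Fintype Zhat] [Nonempty Zhat]
  (d : Zt → Zhat → ℝ) {α : Type} [Finite α] (Q : Ω → α) (Zr : Ω → Zt)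

lemma calE_le_expect (f : α → Zhat) : calE μ d Q Zr ≤ expect μ fun ω => d (Zr ω) (f (Q ω)) :=
  ciInf_le (Set.finite_range _).bddBelow f

lemma exists_expect_eq_calE :
    ∃ f : α → Zhat, (expect μ fun ω => d (Zr ω) (f (Q ω))) = calE μ d Q Zr :=
  exists_eq_ciInf_of_finite

end Estimation

noncomputable def rdCurve {ι : Type*} (dist rate : ι → ℝ) (D : ℝ) : ℝ :=
  sInf (rate '' {i | dist i ≤ D})

section RDCurve

variable {ι : Type*} {dist rate : ι → ℝ} {D₀ : ℝ}

lemma rdCurve_antitoneOn (hbdd : BddBelow (Set.range rate)) (hD₀ : ∃ i, dist i ≤ D₀) :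
    AntitoneOn (rdCurve dist rate) (Set.Ici D₀) := by
  obtain ⟨i, hi⟩ := hD₀
  intro D₁ hD₁ D₂ _ hD₁₂
  exact csInf_le_csInf (hbdd.mono (Set.image_subset_range _ _)) ⟨rate i, i, hi.trans hD₁, rfl⟩
    (Set.image_mono fun j (hj : dist j ≤ D₁) => hj.trans hD₁₂)

lemma rdCurve_convexOn (hbdd : BddBelow (Set.range rate)) (hD₀ : ∃ i, dist i ≤ D₀)
    (hmix : ∀ i j {a b : ℝ}, 0 ≤ a → 0 ≤ b → a + b = 1 →
      ∃ l, dist l ≤ a * dist i + b * dist j ∧ rate l ≤ a * rate i + b * rate j) :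
    ConvexOn ℝ (Set.Ici D₀) (rdCurve dist rate) := by
  obtain ⟨i₀, hi₀⟩ := hD₀
  have hnear : ∀ D ∈ Set.Ici D₀, ∀ ε > 0, ∃ i, dist i ≤ D ∧ rate i ≤ rdCurve dist rate D + ε := by
    intro D hD ε hε
    obtain ⟨_, ⟨i, hi, rfl⟩, hlt⟩ := exists_lt_of_csInf_lt (s := rate '' {i | dist i ≤ D})
      ⟨rate i₀, i₀, hi₀.trans hD, rfl⟩
      (lt_add_of_pos_right (rdCurve dist rate D) hε)
    exact ⟨i, hi, hlt.le⟩
  refine ⟨convex_Ici D₀, fun D₁ hD₁ D₂ hD₂ a b ha hb hab => ?_⟩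
  simp only [smul_eq_mul]
  refine le_of_forall_pos_le_add fun ε hε => ?_
  obtain ⟨i, hi, hri⟩ := hnear D₁ hD₁ ε hε
  obtain ⟨j, hj, hrj⟩ := hnear D₂ hD₂ ε hε
  obtain ⟨l, hl, hrl⟩ := hmix i j ha hb hab
  have hlD : dist l ≤ a * D₁ + b * D₂ := hl.trans (by gcongr)
  calc rdCurve dist rate (a * D₁ + b * D₂) ≤ rate l :=
        csInf_le (hbdd.mono (Set.image_subset_range _ _)) ⟨l, hlD, rfl⟩
    _ ≤ a * rate i + b * rate j := hrl
    _ ≤ a * (rdCurve dist rate D₁ + ε) + b * (rdCurve dist rate D₂ + ε) := by gcongr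
    _ = a * rdCurve dist rate D₁ + b * rdCurve dist rate D₂ + ε := by linear_combination ε * hab

end RDCurve

structure TestChannel (𝒳 : Type) (m : ℕ) where
  k : 𝒳 → Fin m → ℝ
  nonneg : ∀ x u, 0 ≤ k x u
  sum_one : ∀ x, ∑ u, k x u = 1

namespace TestChannel

section Extend

variable {Ω 𝒳 β : Type} [Fintype Ω] (μ : FinPMF Ω) (X : Ω → 𝒳) {m : ℕ} (κ : TestChannel 𝒳 m)

noncomputable def extend : FinPMF (Ω × Fin m) := extendPMF μ X κ.k κ.nonneg κ.sum_one

@[simp]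
lemma extend_p (p : Ω × Fin m) : (κ.extend μ X).p p = μ.p p.1 * κ.k (X p.1) p.2 := rfl

lemma expect_extend (F : Ω → Fin m → ℝ) :
    expect (κ.extend μ X) (fun p => F p.1 p.2) = ∑ ω, μ.p ω * ∑ u, κ.k (X ω) u * F ω u := by
  simp only [expect, extend_p, Fintype.sum_prod_type, Finset.mul_sum, mul_assoc]

variable [DecidableEq β]

lemma prob_extend_fst (W : Ω → β) (w : β) :
    prob (κ.extend μ X) (fun p => W p.1) w = prob μ W w := by
  simp only [prob, Finset.sum_filter, Fintype.sum_prod_type]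
  refine Finset.sum_congr rfl fun ω _ => ?_
  split_ifs
  · simp [← Finset.mul_sum, κ.sum_one]
  · simp

lemma entropy_extend_fst [Fintype β] (W : Ω → β) :
    entropy (κ.extend μ X) (fun p => W p.1) = entropy μ W := by
  simp only [entropy, prob_extend_fst]

lemma prob_extend_pair (W : Ω → β) (u : Fin m) (w : β) :
    prob (κ.extend μ X) (fun p => (p.2, W p.1)) (u, w)
      = ∑ ω with W ω = w, μ.p ω * κ.k (X ω) u := by
  simp only [prob, Finset.sum_filter, Fintype.sum_prod_type, Prod.mk.injEq, ite_and]
  refine Finset.sum_congr rfl fun ω _ => ?_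
  split_ifs <;> simp_all

end Extend

section Mix

variable {𝒳 : Type} {m₁ m₂ : ℕ} (κ₁ : TestChannel 𝒳 m₁) (κ₂ : TestChannel 𝒳 m₂) {a b : ℝ}
  (ha : 0 ≤ a) (hb : 0 ≤ b) (hab : a + b = 1)

/-- Time sharing: use `κ₁` with probability `a` and `κ₂` with probability `b`, on disjoint
copies of their output alphabets. -/
noncomputable def mix : TestChannel 𝒳 (m₁ + m₂) where
  k x := Fin.addCases (fun i => a * κ₁.k x i) (fun j => b * κ₂.k x j)
  nonneg x u := by
    cases u using Fin.addCases
    · simpa using mul_nonneg ha (κ₁.nonneg _ _)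
    · simpa using mul_nonneg hb (κ₂.nonneg _ _)
  sum_one x := by simp [Fin.sum_univ_add, ← Finset.mul_sum, κ₁.sum_one, κ₂.sum_one, hab]

@[simp]
lemma mix_k_castAdd (x : 𝒳) (i : Fin m₁) :
    (mix κ₁ κ₂ ha hb hab).k x (Fin.castAdd m₂ i) = a * κ₁.k x i := by
  simp [mix]

@[simp]
lemma mix_k_natAdd (x : 𝒳) (j : Fin m₂) :
    (mix κ₁ κ₂ ha hb hab).k x (Fin.natAdd m₁ j) = b * κ₂.k x j := by
  simp [mix]

variable {Ω β : Type} [Fintype Ω] (μ : FinPMF Ω) (X : Ω → 𝒳)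

lemma expect_extend_mix (F : Ω → Fin (m₁ + m₂) → ℝ) :
    expect ((mix κ₁ κ₂ ha hb hab).extend μ X) (fun p => F p.1 p.2)
      = a * expect (κ₁.extend μ X) (fun p => F p.1 (Fin.castAdd m₂ p.2))
        + b * expect (κ₂.extend μ X) (fun p => F p.1 (Fin.natAdd m₁ p.2)) := by
  rw [expect_extend, expect_extend μ X κ₁ fun ω i => F ω (Fin.castAdd m₂ i),
    expect_extend μ X κ₂ fun ω j => F ω (Fin.natAdd m₁ j), Finset.mul_sum, Finset.mul_sum,
    ← Finset.sum_add_distrib]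
  refine Finset.sum_congr rfl fun ω _ => ?_
  simp only [Fin.sum_univ_add, mix_k_castAdd, mix_k_natAdd, mul_add, Finset.mul_sum]
  congr 1 <;> exact Finset.sum_congr rfl fun _ _ => by ring

variable [DecidableEq β] (W : Ω → β)

lemma prob_extend_mix_castAdd (i : Fin m₁) (w : β) :
    prob ((mix κ₁ κ₂ ha hb hab).extend μ X) (fun p => (p.2, W p.1)) (Fin.castAdd m₂ i, w)
      = a * prob (κ₁.extend μ X) (fun p => (p.2, W p.1)) (i, w) := by
  simp only [prob_extend_pair, mix_k_castAdd, Finset.mul_sum, mul_left_comm]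

lemma prob_extend_mix_natAdd (j : Fin m₂) (w : β) :
    prob ((mix κ₁ κ₂ ha hb hab).extend μ X) (fun p => (p.2, W p.1)) (Fin.natAdd m₁ j, w)
      = b * prob (κ₂.extend μ X) (fun p => (p.2, W p.1)) (j, w) := by
  simp only [prob_extend_pair, mix_k_natAdd, Finset.mul_sum, mul_left_comm]

lemma entropy_extend_mix [Fintype β] :
    entropy ((mix κ₁ κ₂ ha hb hab).extend μ X) (fun p => (p.2, W p.1))
      = a * entropy (κ₁.extend μ X) (fun p => (p.2, W p.1))
        + b * entropy (κ₂.extend μ X) (fun p => (p.2, W p.1))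
        - a * Real.logb 2 a - b * Real.logb 2 b := by
  have h₁ := sum_mul_mul_logb_mul ha (prob_nonneg (κ₁.extend μ X) fun p => (p.2, W p.1))
    (sum_prob _ _)
  have h₂ := sum_mul_mul_logb_mul hb (prob_nonneg (κ₂.extend μ X) fun p => (p.2, W p.1))
    (sum_prob _ _)
  rw [Fintype.sum_prod_type] at h₁ h₂
  rw [entropy, entropy, entropy, Fintype.sum_prod_type, Fin.sum_univ_add]
  simp only [prob_extend_mix_castAdd, prob_extend_mix_natAdd]
  rw [h₁, h₂]
  ring

end Mix

noncomputable def copy (𝒳 : Type) [Fintype 𝒳] : TestChannel 𝒳 (Fintype.card 𝒳) where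
  k x u := if u = Fintype.equivFin 𝒳 x then 1 else 0
  nonneg x u := by split_ifs <;> norm_num
  sum_one x := by simp

lemma expect_extend_copy {Ω 𝒳 : Type} [Fintype Ω] [Fintype 𝒳] (μ : FinPMF Ω) (X : Ω → 𝒳)
    (F : Ω → Fin (Fintype.card 𝒳) → ℝ) :
    expect ((copy 𝒳).extend μ X) (fun p => F p.1 p.2)
      = expect μ fun ω => F ω (Fintype.equivFin 𝒳 (X ω)) := by
  rw [expect_extend]
  simp [copy, expect]

section Distortion

variable {Ω 𝒳 𝒴 Zt Zhat : Type} [Fintype Ω] [Fintype 𝒴] [Fintype Zhat] [Nonempty Zhat]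
  (μ : FinPMF Ω) (X : Ω → 𝒳) (Y : Ω → 𝒴) (Zr : Ω → Zt) (d : Zt → Zhat → ℝ)

/-- The distortion `ℰ(Z | (U, Y))` of a test channel. -/
noncomputable def distortion {m : ℕ} (κ : TestChannel 𝒳 m) : ℝ :=
  calE (κ.extend μ X) d (fun p => (p.2, Y p.1)) (fun p => Zr p.1)

lemma distortion_copy_le [Fintype 𝒳] :
    (copy 𝒳).distortion μ X Y Zr d ≤ calE μ d (fun ω => (X ω, Y ω)) Zr := by
  obtain ⟨g, hg⟩ := exists_expect_eq_calE μ d (fun ω => (X ω, Y ω)) Zr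
  let f : Fin (Fintype.card 𝒳) × 𝒴 → Zhat := fun q => g ((Fintype.equivFin 𝒳).symm q.1, q.2)
  calc (copy 𝒳).distortion μ X Y Zr d
      ≤ expect ((copy 𝒳).extend μ X) fun p => d (Zr p.1) (f (p.2, Y p.1)) :=
        calE_le_expect ((copy 𝒳).extend μ X) d (fun p => (p.2, Y p.1)) (fun p => Zr p.1) f
    _ = calE μ d (fun ω => (X ω, Y ω)) Zr := by
        rw [expect_extend_copy μ X fun ω u => d (Zr ω) (f (u, Y ω)), ← hg]
        simp [f]

variable {m₁ m₂ : ℕ} (κ₁ : TestChannel 𝒳 m₁) (κ₂ : TestChannel 𝒳 m₂) {a b : ℝ}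
  (ha : 0 ≤ a) (hb : 0 ≤ b) (hab : a + b = 1)

/-- Each component keeps its own optimal estimator on its part of the output alphabet. -/
lemma distortion_mix_le :
    (mix κ₁ κ₂ ha hb hab).distortion μ X Y Zr d
      ≤ a * κ₁.distortion μ X Y Zr d + b * κ₂.distortion μ X Y Zr d := by
  obtain ⟨f₁, hf₁⟩ :=
    exists_expect_eq_calE (κ₁.extend μ X) d (fun p => (p.2, Y p.1)) (fun p => Zr p.1)
  obtain ⟨f₂, hf₂⟩ :=
    exists_expect_eq_calE (κ₂.extend μ X) d (fun p => (p.2, Y p.1)) (fun p => Zr p.1)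
  let f : Fin (m₁ + m₂) × 𝒴 → Zhat :=
    fun q => Fin.addCases (fun i => f₁ (i, q.2)) (fun j => f₂ (j, q.2)) q.1
  calc (mix κ₁ κ₂ ha hb hab).distortion μ X Y Zr d
      ≤ expect ((mix κ₁ κ₂ ha hb hab).extend μ X) fun p => d (Zr p.1) (f (p.2, Y p.1)) :=
        calE_le_expect ((mix κ₁ κ₂ ha hb hab).extend μ X) d (fun p => (p.2, Y p.1))
          (fun p => Zr p.1) f
    _ = a * κ₁.distortion μ X Y Zr d + b * κ₂.distortion μ X Y Zr d := by
        rw [expect_extend_mix κ₁ κ₂ ha hb hab μ X fun ω u => d (Zr ω) (f (u, Y ω))]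
        simp only [f, Fin.addCases_left, Fin.addCases_right, hf₁, hf₂]
        rfl

end Distortion

section Rate

variable {Ω 𝒳 𝒴 : Type} [Fintype Ω] [Fintype 𝒳] [DecidableEq 𝒳] [Fintype 𝒴] [DecidableEq 𝒴]
  (μ : FinPMF Ω) (X : Ω → 𝒳) (Y : Ω → 𝒴)

/-- The rate `I(X; U | Y)` of a test channel. -/
noncomputable def rate {m : ℕ} (κ : TestChannel 𝒳 m) : ℝ :=
  condMI (κ.extend μ X) (fun p => X p.1) (fun p => p.2) (fun p => Y p.1)

variable {m₁ m₂ : ℕ} (κ₁ : TestChannel 𝒳 m₁) (κ₂ : TestChannel 𝒳 m₂) {a b : ℝ}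
  (ha : 0 ≤ a) (hb : 0 ≤ b) (hab : a + b = 1)

/-- The binary entropy of the time-sharing variable cancels between `H(U, Y)` and `H(X, U, Y)`. -/
lemma rate_mix :
    (mix κ₁ κ₂ ha hb hab).rate μ X Y = a * κ₁.rate μ X Y + b * κ₂.rate μ X Y := by
  have hXUY : ∀ {m : ℕ} (κ : TestChannel 𝒳 m),
      entropy (κ.extend μ X) (fun p => (X p.1, p.2, Y p.1))
        = entropy (κ.extend μ X) (fun p => (p.2, (X p.1, Y p.1))) := fun κ =>
    entropy_eq_of_injective _ _ (g := fun t => (t.2.1, t.1, t.2.2))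
      (by rintro ⟨u, x, y⟩ ⟨u', x', y'⟩ h; simp_all) _ fun _ => rfl
  simp only [rate, condMI, hXUY, entropy_extend_mix κ₁ κ₂ ha hb hab μ X Y,
    entropy_extend_mix κ₁ κ₂ ha hb hab μ X fun ω => (X ω, Y ω), entropy_extend_fst μ X _ Y,
    entropy_extend_fst μ X _ fun ω => (X ω, Y ω)]
  obtain rfl : b = 1 - a := by linarith
  ring

end Rate

end TestChannel

lemma RFWZ_eq_rdCurve {Ω 𝒳 𝒴 Zt Zhat : Type} [Fintype Ω] [Fintype 𝒳] [DecidableEq 𝒳]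
    [Fintype 𝒴] [DecidableEq 𝒴] [Fintype Zhat] [Nonempty Zhat] (μ : FinPMF Ω) (X : Ω → 𝒳)
    (Y : Ω → 𝒴) (Zr : Ω → Zt) (d : Zt → Zhat → ℝ) (D : ℝ) :
    RFWZ μ X Y Zr d D = rdCurve (fun c : Σ m, TestChannel 𝒳 m => c.2.distortion μ X Y Zr d)
      (fun c => c.2.rate μ X Y) D := by
  unfold RFWZ rdCurve
  congr 1
  ext r
  constructor
  · rintro ⟨m, k, hk0, hk1, hD, rfl⟩
    exact ⟨⟨m, k, hk0, hk1⟩, hD, rfl⟩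
  · rintro ⟨⟨m, k, hk0, hk1⟩, hD, rfl⟩
    exact ⟨m, k, hk0, hk1, hD, rfl⟩

theorem RFWZ_antitoneOn_convexOn_general
    {Ω 𝒳 𝒴 Zt : Type} [Fintype Ω] [Fintype 𝒳] [DecidableEq 𝒳]
    [Fintype 𝒴] [DecidableEq 𝒴] {Zhat : Type} [Fintype Zhat] [Nonempty Zhat]
    (μ : FinPMF Ω) (X : Ω → 𝒳) (Y : Ω → 𝒴) (Zr : Ω → Zt)
    (d : Zt → Zhat → ℝ) :
    AntitoneOn (fun D => RFWZ μ X Y Zr d D)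
      (Set.Ici (calE μ d (fun ω => (X ω, Y ω)) Zr)) ∧
    ConvexOn ℝ (Set.Ici (calE μ d (fun ω => (X ω, Y ω)) Zr))
      (fun D => RFWZ μ X Y Zr d D) := by
  set dist := fun c : Σ m, TestChannel 𝒳 m => c.2.distortion μ X Y Zr d
  set rate := fun c : Σ m, TestChannel 𝒳 m => c.2.rate μ X Y
  have hR : (fun D => RFWZ μ X Y Zr d D) = rdCurve dist rate :=
    funext (RFWZ_eq_rdCurve μ X Y Zr d)
  have hbdd : BddBelow (Set.range rate) := ⟨0, by rintro _ ⟨c, rfl⟩; exact condMI_nonneg _ _ _ _⟩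
  have hcopy : ∃ c, dist c ≤ calE μ d (fun ω => (X ω, Y ω)) Zr :=
    ⟨⟨_, TestChannel.copy 𝒳⟩, TestChannel.distortion_copy_le μ X Y Zr d⟩
  have hmix : ∀ c₁ c₂ {a b : ℝ}, 0 ≤ a → 0 ≤ b → a + b = 1 →
      ∃ c, dist c ≤ a * dist c₁ + b * dist c₂ ∧ rate c ≤ a * rate c₁ + b * rate c₂ :=
    fun ⟨_, κ₁⟩ ⟨_, κ₂⟩ _ _ ha hb hab => ⟨⟨_, κ₁.mix κ₂ ha hb hab⟩,
      TestChannel.distortion_mix_le μ X Y Zr d κ₁ κ₂ ha hb hab,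
      (TestChannel.rate_mix μ X Y κ₁ κ₂ ha hb hab).le⟩
  rw [hR]
  exact ⟨rdCurve_antitoneOn hbdd hcopy, rdCurve_convexOn hbdd hcopy hmix⟩

/-- **Monotonicity and convexity of the Wyner-Ziv-type rate-distortion function** (used in
the proof of Theorem 6): with `D₀ = ℰ(Z|(X,Y))` the minimum attainable distortion,
`D ↦ R^FWZ_{Z,X|Y}(D)` is non-increasing and convex on `[D₀, ∞)`. -/
theorem RFWZ_antitoneOn_convexOn
    {Ω 𝒳 𝒴 Zt : Type} [Fintype Ω] [Fintype 𝒳] [DecidableEq 𝒳]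
    [Fintype 𝒴] [DecidableEq 𝒴] {Zhat : Type} [Fintype Zhat] [Nonempty Zhat]
    (μ : FinPMF Ω) (X : Ω → 𝒳) (Y : Ω → 𝒴) (Zr : Ω → Zt)
    (d : Zt → Zhat → ℝ) (hd : ∀ z zh, 0 ≤ d z zh) :
    AntitoneOn (fun D => RFWZ μ X Y Zr d D)
      (Set.Ici (calE μ d (fun ω => (X ω, Y ω)) Zr)) ∧
    ConvexOn ℝ (Set.Ici (calE μ d (fun ω => (X ω, Y ω)) Zr))
      (fun D => RFWZ μ X Y Zr d D) :=
  RFWZ_antitoneOn_convexOn_general μ X Y Zr d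

end Cascade
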